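/- arXiv:1704.04286 — 3 statements merged into one kernel-verified Lean document; each statement's English description precedes it below -/
import Mathlib

section
/- Given short exact sequences 0 → P → E → R → 0 ([E] ∈ Ext¹(R,P)), 0 → P → H → S → 0 ([H] ∈ Ext¹(S,P)), 0 → R → F → Q → 0 ([F] ∈ Ext¹(Q,R)), and 0 → S → G → Q → 0 ([G] ∈ Ext¹(Q,S)), the Yoneda products satisfy: the Baer sum [E]∪[F] + [H]∪[G] in Ext²(Q,P) equals the class of the 2-extension 0 → P → W → Y → Q → 0, where W is the pushout of E ⊕ H along the codiagonal P ⊕ P → P, Y is the pullback F ×_Q G, and W → Y is the composite W → R ⊕ S → Y. -/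
open CategoryTheory Abelian Limits

universe w v u

/-!
Composing left to right, as `Ext.comp` does: the projection `Y → F` is a morphism of
extensions of `Q`, so `[F] = [Y] · fst` in `Ext¹(Q, R)`, and likewise `[G] = [Y] · snd`; dually
`E → W` and `H → W` are morphisms of extensions by `P`, so `[E] = inl · [W]` and
`[H] = inr · [W]`. The Baer sum is therefore
`[Y] · (fst ≫ inl + snd ≫ inr) · [W] = [Y] · [W]`.
-/

namespace CategoryTheory

variable {C : Type*} [Category C] [Abelian C] [HasExt.{w} C]

namespace ShortComplex.ShortExact

lemma extClass_eq_extClass_comp_mk₀_of_comm {X₁ X₂ X₁' X₂' X₃ : C}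
    {f : X₁ ⟶ X₂} {g : X₂ ⟶ X₃} {w : f ≫ g = 0}
    (hS : (ShortComplex.mk f g w).ShortExact)
    {f' : X₁' ⟶ X₂'} {g' : X₂' ⟶ X₃} {w' : f' ≫ g' = 0}
    (hS' : (ShortComplex.mk f' g' w').ShortExact)
    (a : X₁ ⟶ X₁') (b : X₂ ⟶ X₂') (ha : f ≫ b = a ≫ f') (hb : b ≫ g' = g) :
    hS'.extClass = hS.extClass.comp (Ext.mk₀ a) (add_zero 1) := by
  rw [hS.extClass_naturality hS' ⟨a, b, 𝟙 X₃, ha.symm, by simpa using hb⟩]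
  exact (Ext.mk₀_id_comp _).symm

lemma extClass_eq_mk₀_comp_extClass_of_comm {X₁ X₂ X₃ X₂' X₃' : C}
    {f : X₁ ⟶ X₂} {g : X₂ ⟶ X₃} {w : f ≫ g = 0}
    (hS : (ShortComplex.mk f g w).ShortExact)
    {f' : X₁ ⟶ X₂'} {g' : X₂' ⟶ X₃'} {w' : f' ≫ g' = 0}
    (hS' : (ShortComplex.mk f' g' w').ShortExact)
    (b : X₂ ⟶ X₂') (c : X₃ ⟶ X₃') (hb : f ≫ b = f') (hc : b ≫ g' = g ≫ c) :
    hS.extClass = (Ext.mk₀ c).comp hS'.extClass (zero_add 1) := by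
  rw [← hS.extClass_naturality hS' ⟨𝟙 X₁, b, c, by simpa using hb.symm, hc⟩]
  exact (Ext.comp_mk₀_id _).symm

end ShortComplex.ShortExact

namespace Abelian.Ext

lemma comp_eq_comp_fst_inl_add_comp_snd_inr {X Y Z₁ Z₂ : C} {a b c : ℕ}
    (α : Ext X (Z₁ ⊞ Z₂) a) (β : Ext (Z₁ ⊞ Z₂) Y b) (h : a + b = c) :
    α.comp β h =
      (α.comp (mk₀ biprod.fst) (add_zero a)).comp
          ((mk₀ biprod.inl).comp β (zero_add b)) h +
        (α.comp (mk₀ biprod.snd) (add_zero a)).comp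
          ((mk₀ biprod.inr).comp β (zero_add b)) h := by
  simp only [comp_assoc_of_second_deg_zero, mk₀_comp_mk₀_assoc, ← comp_add, ← add_comp,
    ← mk₀_add, biprod.total, mk₀_id_comp]

end Abelian.Ext

end CategoryTheory

open ShortComplex.ShortExact in
/-- Given extensions `[E] ∈ Ext¹(R,P)`, `[H] ∈ Ext¹(S,P)`, `[F] ∈ Ext¹(Q,R)`,
`[G] ∈ Ext¹(Q,S)`, the Baer sum `[E]∪[F] + [H]∪[G]` in `Ext²(Q,P)` equals the
class of the 2-extension `0 → P → W → Y → Q → 0`, where `W` is the pushout of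
`E ⊕ H` along the codiagonal `P ⊕ P → P`, `Y = F ×_Q G`, and the 2-extension
is the splice of `0 → P → W → R ⊕ S → 0` with `0 → R ⊕ S → Y → Q → 0`. -/
theorem statement9 {A : Type u} [CommRing A] [HasExt.{w} (ModuleCat.{v} A)]
    {P E R H S F G Q : ModuleCat.{v} A}
    (pe : P ⟶ E) (er : E ⟶ R) (wE : pe ≫ er = 0)
    (hE : (ShortComplex.mk pe er wE).ShortExact)
    (ph : P ⟶ H) (hs : H ⟶ S) (wH : ph ≫ hs = 0)
    (hH : (ShortComplex.mk ph hs wH).ShortExact)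
    (rf : R ⟶ F) (fq : F ⟶ Q) (wF : rf ≫ fq = 0)
    (hF : (ShortComplex.mk rf fq wF).ShortExact)
    (sg : S ⟶ G) (gq : G ⟶ Q) (wG : sg ≫ gq = 0)
    (hG : (ShortComplex.mk sg gq wG).ShortExact)
    -- `Y = F ×_Q G`, with the short exact sequence `0 → R ⊕ S → Y → Q → 0`
    {Y : ModuleCat.{v} A} (yF : Y ⟶ F) (yG : Y ⟶ G)
    (hYpb : IsPullback yF yG fq gq)
    (ιY : R ⊞ S ⟶ Y)
    (hιYF : ιY ≫ yF = biprod.desc rf 0) (hιYG : ιY ≫ yG = biprod.desc 0 sg)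
    (wY : ιY ≫ (yF ≫ fq) = 0)
    (hY : (ShortComplex.mk ιY (yF ≫ fq) wY).ShortExact)
    -- `W` is the pushout of `E ⊕ H` along the codiagonal, with the short
    -- exact sequence `0 → P → W → R ⊕ S → 0`
    {W : ModuleCat.{v} A} (pW : P ⟶ W) (wEH : E ⊞ H ⟶ W)
    (hWpo : IsPushout (biprod.desc (𝟙 P) (𝟙 P)) (biprod.map pe ph) pW wEH)
    (πW : W ⟶ R ⊞ S) (hπW : wEH ≫ πW = biprod.map er hs)
    (wW : pW ≫ πW = 0)
    (hW : (ShortComplex.mk pW πW wW).ShortExact) :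
    (hF.extClass.comp hE.extClass (by norm_num) +
      hG.extClass.comp hH.extClass (by norm_num) : Ext Q P 2) =
    hY.extClass.comp hW.extClass (by norm_num) := by
  rw [extClass_eq_extClass_comp_mk₀_of_comm hY hF biprod.fst yF
      (by rw [hιYF]; apply biprod.hom_ext' <;> simp) rfl,
    extClass_eq_extClass_comp_mk₀_of_comm hY hG biprod.snd yG
      (by rw [hιYG]; apply biprod.hom_ext' <;> simp) hYpb.w.symm,
    extClass_eq_mk₀_comp_extClass_of_comm hE hW (biprod.inl ≫ wEH) biprod.inl
      (by simpa using biprod.inl ≫= hWpo.w.symm) (by simp [hπW]),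
    extClass_eq_mk₀_comp_extClass_of_comm hH hW (biprod.inr ≫ wEH) biprod.inr
      (by simpa using biprod.inr ≫= hWpo.w.symm) (by simp [hπW]),
    ← Ext.comp_eq_comp_fst_inl_add_comp_snd_inr]
end

section
/- Given the four short exact sequences of the previous setup and the sequence 0 → R ⊕ S → Y → Q → 0 with Y = F ×_Q G, let δ_Y : Ext¹(R ⊕ S, P) → Ext²(Q, P) be the connecting homomorphism from applying Hom(−, P). Then for the class [W] ∈ Ext¹(R ⊕ S, P) of the codiagonal pushout of E ⊕ H, δ_Y([W]) equals the Baer sum of [E]∪[F] and [H]∪[G] in Ext²(Q, P). -/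
/-!
Writing `𝟙 (R ⊞ S) = fst ≫ inl + snd ≫ inr` inside the splice `[Y] ∘ [W]` splits it into
`([Y] ∘ fst) ∘ (inl ∘ [W]) + ([Y] ∘ snd) ∘ (inr ∘ [W])`. The projections of `Y = F ×_Q G` and
the inclusions of `E, H` into the codiagonal pushout `W` are morphisms of short exact sequences
which are the identity on `Q` resp. `P`, so naturality of extension classes identifies
`[Y] ∘ fst = [F]`, `[Y] ∘ snd = [G]`, `inl ∘ [W] = [E]` and `inr ∘ [W] = [H]`.
-/

open CategoryTheory Limits

universe w v u

namespace CategoryTheory.Abelian.Ext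

variable {C : Type u} [Category.{v} C] [Abelian C] [HasExt.{w} C]

lemma comp_eq_add_biprod {X B₁ B₂ Z : C} {n m p : ℕ} (α : Ext X (B₁ ⊞ B₂) n)
    (β : Ext (B₁ ⊞ B₂) Z m) (h : n + m = p) :
    α.comp β h =
      (α.comp (mk₀ biprod.fst) (add_zero n)).comp ((mk₀ biprod.inl).comp β (zero_add m)) h +
        (α.comp (mk₀ biprod.snd) (add_zero n)).comp ((mk₀ biprod.inr).comp β (zero_add m)) h := by
  rw [comp_assoc_of_second_deg_zero, comp_assoc_of_second_deg_zero, mk₀_comp_mk₀_assoc,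
    mk₀_comp_mk₀_assoc, ← comp_add, ← add_comp, ← mk₀_add, biprod.total, mk₀_id_comp]

end CategoryTheory.Abelian.Ext

namespace CategoryTheory.ShortComplex.ShortExact

open Abelian

variable {C : Type u} [Category.{v} C] [Abelian C] [HasExt.{w} C]

lemma extClass_comp_mk₀_eq_of_comm {X₁ X₂ X₁' X₂' X₃ : C}
    {f : X₁ ⟶ X₂} {g : X₂ ⟶ X₃} {w : f ≫ g = 0} (h : (ShortComplex.mk f g w).ShortExact)
    {f' : X₁' ⟶ X₂'} {g' : X₂' ⟶ X₃} {w' : f' ≫ g' = 0}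
    (h' : (ShortComplex.mk f' g' w').ShortExact)
    (a : X₁ ⟶ X₁') (b : X₂ ⟶ X₂') (hab : f ≫ b = a ≫ f') (hb : b ≫ g' = g) :
    h.extClass.comp (Ext.mk₀ a) (add_zero 1) = h'.extClass := by
  simpa using h.extClass_naturality h'
    { τ₁ := a, τ₂ := b, τ₃ := 𝟙 X₃, comm₁₂ := hab.symm, comm₂₃ := by simpa using hb }

lemma mk₀_comp_extClass_eq_of_comm {X₁ X₂ X₃ X₂' X₃' : C}
    {f : X₁ ⟶ X₂} {g : X₂ ⟶ X₃} {w : f ≫ g = 0} (h : (ShortComplex.mk f g w).ShortExact)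
    {f' : X₁ ⟶ X₂'} {g' : X₂' ⟶ X₃'} {w' : f' ≫ g' = 0}
    (h' : (ShortComplex.mk f' g' w').ShortExact)
    (b : X₂ ⟶ X₂') (c : X₃ ⟶ X₃') (hb : f ≫ b = f') (hbc : b ≫ g' = g ≫ c) :
    (Ext.mk₀ c).comp h'.extClass (zero_add 1) = h.extClass := by
  simpa using (h.extClass_naturality h'
    { τ₁ := 𝟙 X₁, τ₂ := b, τ₃ := c, comm₁₂ := by simpa using hb.symm, comm₂₃ := hbc }).symm

end CategoryTheory.ShortComplex.ShortExact

open Abelian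

/-- For `[W] ∈ Ext¹(R ⊕ S, P)` the class of the codiagonal pushout of
`E ⊕ H`, the image `δ_Y([W])` of `[W]` under the connecting homomorphism
`δ_Y : Ext¹(R ⊕ S, P) → Ext²(Q, P)` of the sequence `0 → R ⊕ S → Y → Q → 0`
(which is given by splicing, i.e. by composition with the extension class of
`0 → R ⊕ S → Y → Q → 0`) equals the Baer sum of the Yoneda products
`[E]∪[F]` and `[H]∪[G]` in `Ext²(Q, P)`. -/
theorem statement10 {A : Type u} [CommRing A] [HasExt.{w} (ModuleCat.{v} A)]
    {P E R H S F G Q : ModuleCat.{v} A}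
    (pe : P ⟶ E) (er : E ⟶ R) (wE : pe ≫ er = 0)
    (hE : (ShortComplex.mk pe er wE).ShortExact)
    (ph : P ⟶ H) (hs : H ⟶ S) (wH : ph ≫ hs = 0)
    (hH : (ShortComplex.mk ph hs wH).ShortExact)
    (rf : R ⟶ F) (fq : F ⟶ Q) (wF : rf ≫ fq = 0)
    (hF : (ShortComplex.mk rf fq wF).ShortExact)
    (sg : S ⟶ G) (gq : G ⟶ Q) (wG : sg ≫ gq = 0)
    (hG : (ShortComplex.mk sg gq wG).ShortExact)
    -- `Y = F ×_Q G`, with the short exact sequence `0 → R ⊕ S → Y → Q → 0`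
    {Y : ModuleCat.{v} A} (yF : Y ⟶ F) (yG : Y ⟶ G)
    (hYpb : IsPullback yF yG fq gq)
    (ιY : R ⊞ S ⟶ Y)
    (hιYF : ιY ≫ yF = biprod.desc rf 0) (hιYG : ιY ≫ yG = biprod.desc 0 sg)
    (wY : ιY ≫ (yF ≫ fq) = 0)
    (hY : (ShortComplex.mk ιY (yF ≫ fq) wY).ShortExact)
    -- `W` is the pushout of `E ⊕ H` along the codiagonal, with the short
    -- exact sequence `0 → P → W → R ⊕ S → 0`
    {W : ModuleCat.{v} A} (pW : P ⟶ W) (wEH : E ⊞ H ⟶ W)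
    (hWpo : IsPushout (biprod.desc (𝟙 P) (𝟙 P)) (biprod.map pe ph) pW wEH)
    (πW : W ⟶ R ⊞ S) (hπW : wEH ≫ πW = biprod.map er hs)
    (wW : pW ≫ πW = 0)
    (hW : (ShortComplex.mk pW πW wW).ShortExact) :
    (hY.extClass.comp hW.extClass (by norm_num) : Ext Q P 2) =
    hF.extClass.comp hE.extClass (by norm_num) +
      hG.extClass.comp hH.extClass (by norm_num) := by
  have hYF := hY.extClass_comp_mk₀_eq_of_comm hF biprod.fst yF
    (by rw [hιYF]; apply biprod.hom_ext' <;> simp) rfl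
  have hYG := hY.extClass_comp_mk₀_eq_of_comm hG biprod.snd yG
    (by rw [hιYG]; apply biprod.hom_ext' <;> simp) hYpb.w.symm
  have hWE := hE.mk₀_comp_extClass_eq_of_comm hW (biprod.inl ≫ wEH) biprod.inl
    (by simpa using (biprod.inl ≫= hWpo.w).symm) (by simp [hπW])
  have hWH := hH.mk₀_comp_extClass_eq_of_comm hW (biprod.inr ≫ wEH) biprod.inr
    (by simpa using (biprod.inr ≫= hWpo.w).symm) (by simp [hπW])
  rw [Ext.comp_eq_add_biprod, hYF, hYG, hWE, hWH]
end

section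
/- With notation as above, if the map α : Hom(R ⊕ S, P) → Ext¹(Q, P), α(f,g) = δ_F(f) + δ_G(g), is surjective, then any two completions X, X' of the 3×3 frame determine equal classes in Ext¹(Y, P); in particular, the completion is unique up to isomorphism of extensions of Y by P. -/
open CategoryTheory Abelian Limits

universe w v u

/-! Two completions `x, x'` have the same image under `γ`, so `x - x'` comes from
some `c ∈ Ext¹(Q, P)` along `Y → Q`. By surjectivity of `α`, `c = δ_F(f) + δ_G(g)`, and
each summand dies when pulled back to `Y`, because `Y → Q` factors through `F → Q`
and through `G → Q`, which kill `δ_F` and `δ_G` respectively. -/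

namespace CategoryTheory.ShortComplex.ShortExact

variable {C : Type u} [Category.{v} C] [Abelian C] [HasExt.{w} C]
  {S : ShortComplex C} (hS : S.ShortExact)
include hS

lemma mk₀_comp_comp_extClass_comp {X Y : C} (t : X ⟶ S.X₂) {n : ℕ} (γ : Ext S.X₁ Y n)
    {n' : ℕ} (h : 1 + n = n') :
    (Ext.mk₀ (t ≫ S.g)).comp (hS.extClass.comp γ h) (zero_add n') = 0 := by
  rw [← Ext.mk₀_comp_mk₀, Ext.comp_assoc_of_second_deg_zero, hS.comp_extClass_assoc,
    Ext.comp_zero]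

lemma mk₀_f_comp_injective {Y : C} {n : ℕ}
    (hg : ∀ c : Ext S.X₃ Y n, (Ext.mk₀ S.g).comp c (zero_add n) = 0) :
    Function.Injective fun x : Ext S.X₂ Y n ↦ (Ext.mk₀ S.f).comp x (zero_add n) := by
  intro x x' (hxx' : (Ext.mk₀ S.f).comp x _ = (Ext.mk₀ S.f).comp x' _)
  obtain ⟨c, hc⟩ := Ext.contravariant_sequence_exact₂ hS Y (x - x')
    (by rw [sub_eq_add_neg, Ext.comp_add, Ext.comp_neg, hxx', add_neg_cancel])
  rw [← sub_eq_zero, ← hc, hg]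

end CategoryTheory.ShortComplex.ShortExact

theorem statement14_general {A : Type u} [CommRing A] [HasExt.{w} (ModuleCat.{v} A)]
    {P R S F G Q : ModuleCat.{v} A}
    (rf : R ⟶ F) (fq : F ⟶ Q) (wF : rf ≫ fq = 0)
    (hF : (ShortComplex.mk rf fq wF).ShortExact)
    (sg : S ⟶ G) (gq : G ⟶ Q) (wG : sg ≫ gq = 0)
    (hG : (ShortComplex.mk sg gq wG).ShortExact)
    -- `Y = F ×_Q G`, with the short exact sequence `0 → R ⊕ S → Y → Q → 0`
    {Y : ModuleCat.{v} A} (yF : Y ⟶ F) (yG : Y ⟶ G)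
    (hYpb : IsPullback yF yG fq gq)
    (ιY : R ⊞ S ⟶ Y)
    (wY : ιY ≫ (yF ≫ fq) = 0)
    (hY : (ShortComplex.mk ιY (yF ≫ fq) wY).ShortExact)
    -- `W` is the codiagonal pushout of `E ⊕ H`, with `0 → P → W → R ⊕ S → 0`
    {W : ModuleCat.{v} A} (pW : P ⟶ W)
    (πW : W ⟶ R ⊞ S)
    (wW : pW ≫ πW = 0)
    (hW : (ShortComplex.mk pW πW wW).ShortExact)
    -- `α` is surjective
    (hα : ∀ c : Ext Q P 1, ∃ (f : R ⟶ P) (g : S ⟶ P),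
      c = hF.extClass.comp (Ext.mk₀ f) (add_zero 1) +
        hG.extClass.comp (Ext.mk₀ g) (add_zero 1)) :
    ∀ x x' : Ext Y P 1,
      (Ext.mk₀ ιY).comp x (zero_add 1) = hW.extClass →
      (Ext.mk₀ ιY).comp x' (zero_add 1) = hW.extClass →
      x = x' := by
  intro x x' hx hx'
  refine hY.mk₀_f_comp_injective (fun c ↦ ?_) (hx.trans hx'.symm)
  obtain ⟨f, g, rfl⟩ := hα c
  have hF0 := hF.mk₀_comp_comp_extClass_comp yF (Ext.mk₀ f) (add_zero 1)
  have hG0 := hG.mk₀_comp_comp_extClass_comp yG (Ext.mk₀ g) (add_zero 1)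
  rw [← hYpb.w] at hG0
  rw [Ext.comp_add, hF0, hG0, add_zero]

/-- If `α : Hom(R ⊕ S, P) → Ext¹(Q, P)`, `α(f, g) = δ_F(f) + δ_G(g)`, is
surjective, then any two completions of the 3×3 frame determine equal classes
in `Ext¹(Y, P)` (completions correspond to classes `x` with `γ(x) = [W]`,
where `γ : Ext¹(Y, P) → Ext¹(R ⊕ S, P)` is composition with `R ⊕ S → Y`);
in particular the completion is unique up to isomorphism of extensions of `Y`
by `P`. -/
theorem statement14 {A : Type u} [CommRing A] [HasExt.{w} (ModuleCat.{v} A)]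
    {P E R H S F G Q : ModuleCat.{v} A}
    (pe : P ⟶ E) (er : E ⟶ R) (wE : pe ≫ er = 0)
    (hE : (ShortComplex.mk pe er wE).ShortExact)
    (ph : P ⟶ H) (hs : H ⟶ S) (wH : ph ≫ hs = 0)
    (hH : (ShortComplex.mk ph hs wH).ShortExact)
    (rf : R ⟶ F) (fq : F ⟶ Q) (wF : rf ≫ fq = 0)
    (hF : (ShortComplex.mk rf fq wF).ShortExact)
    (sg : S ⟶ G) (gq : G ⟶ Q) (wG : sg ≫ gq = 0)
    (hG : (ShortComplex.mk sg gq wG).ShortExact)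
    -- `Y = F ×_Q G`, with the short exact sequence `0 → R ⊕ S → Y → Q → 0`
    {Y : ModuleCat.{v} A} (yF : Y ⟶ F) (yG : Y ⟶ G)
    (hYpb : IsPullback yF yG fq gq)
    (ιY : R ⊞ S ⟶ Y)
    (hιYF : ιY ≫ yF = biprod.desc rf 0) (hιYG : ιY ≫ yG = biprod.desc 0 sg)
    (wY : ιY ≫ (yF ≫ fq) = 0)
    (hY : (ShortComplex.mk ιY (yF ≫ fq) wY).ShortExact)
    -- `W` is the codiagonal pushout of `E ⊕ H`, with `0 → P → W → R ⊕ S → 0`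
    {W : ModuleCat.{v} A} (pW : P ⟶ W) (wEH : E ⊞ H ⟶ W)
    (hWpo : IsPushout (biprod.desc (𝟙 P) (𝟙 P)) (biprod.map pe ph) pW wEH)
    (πW : W ⟶ R ⊞ S) (hπW : wEH ≫ πW = biprod.map er hs)
    (wW : pW ≫ πW = 0)
    (hW : (ShortComplex.mk pW πW wW).ShortExact)
    -- `α` is surjective
    (hα : ∀ c : Ext Q P 1, ∃ (f : R ⟶ P) (g : S ⟶ P),
      c = hF.extClass.comp (Ext.mk₀ f) (add_zero 1) +
        hG.extClass.comp (Ext.mk₀ g) (add_zero 1)) :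
    ∀ x x' : Ext Y P 1,
      (Ext.mk₀ ιY).comp x (zero_add 1) = hW.extClass →
      (Ext.mk₀ ιY).comp x' (zero_add 1) = hW.extClass →
      x = x' :=
  statement14_general rf fq wF hF sg gq wG hG yF yG hYpb ιY wY hY pW πW wW hW hα
end
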